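/- Let n ≥ 3 be an integer and set \(r = \lfloor n/\log n \rfloor\). Then \((n/\log n)^n \cdot (n - n/\log n)^{\,n - n/\log n} \ge \left(\frac{3 n^2}{10 \log n}\right)^n\). -/
import Mathlib


open Real

theorem stmt_2 (n : ℕ) (hn : 226 ≤ n) :
    ((n : ℝ) / Real.log n) ^ (n : ℝ) *
      ((n : ℝ) - (n : ℝ) / Real.log n) ^ ((n : ℝ) - (n : ℝ) / Real.log n) ≥
      (3 * (n : ℝ) ^ 2 / (10 * Real.log n)) ^ (n : ℝ) := by
  have hn' : (226 : ℝ) ≤ (n : ℝ) := by exact_mod_cast hn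
  have hnpos : (0:ℝ) < n := by linarith
  set L := Real.log n with hLdef
  have hL5 : (5:ℝ) ≤ L := by
    rw [hLdef, Real.le_log_iff_exp_le hnpos]
    have h1 : Real.exp 5 = Real.exp 1 ^ 5 := by
      rw [← Real.exp_nat_mul]; norm_num
    have h2 : Real.exp 1 ^ 5 ≤ (2.7182818286 : ℝ) ^ 5 :=
      pow_le_pow_left₀ (Real.exp_pos 1).le Real.exp_one_lt_d9.le 5
    have h3 : (2.7182818286 : ℝ) ^ 5 ≤ 226 := by norm_num
    linarith
  have hLpos : (0:ℝ) < L := by linarith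
  set t : ℝ := 1 - 1/L with htdef
  have h1L : 1/L ≤ 1/5 := by
    apply one_div_le_one_div_of_le <;> linarith
  have h1Lpos : 0 < 1/L := by positivity
  have ht45 : (4/5 : ℝ) ≤ t := by rw [htdef]; linarith
  have tpos : (0:ℝ) < t := lt_of_lt_of_le (by norm_num) ht45
  have hm : (n:ℝ) - (n:ℝ)/L = (n:ℝ) * t := by rw [htdef]; ring
  have hmpos : (0:ℝ) < (n:ℝ) * t := mul_pos hnpos tpos
  have hlogm : Real.log ((n:ℝ) * t) = L + Real.log t := by
    rw [Real.log_mul (ne_of_gt hnpos) (ne_of_gt tpos)]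
  have hlogt : 1 - 1/t ≤ Real.log t := by
    have h := Real.log_le_sub_one_of_pos (inv_pos.mpr tpos)
    rw [Real.log_inv] at h
    rw [one_div]
    linarith
  have hlog103 : 1 + 1/L ≤ Real.log (10/3) := by
    have h65 : (6/5:ℝ) ≤ Real.log (10/3) := by
      rw [Real.le_log_iff_exp_le (by norm_num : (0:ℝ) < 10/3)]
      have h5 : Real.exp (6/5) ^ 5 = Real.exp 6 := by
        rw [← Real.exp_nat_mul]; norm_num
      have h6 : Real.exp 6 = Real.exp 1 ^ 6 := by
        rw [← Real.exp_nat_mul]; norm_num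
      have h7 : Real.exp 1 ^ 6 ≤ (2.7182818286 : ℝ) ^ 6 :=
        pow_le_pow_left₀ (Real.exp_pos 1).le Real.exp_one_lt_d9.le 6
      have h8 : (2.7182818286 : ℝ) ^ 6 ≤ (10/3:ℝ) ^ 5 := by norm_num
      have h9 : Real.exp (6/5) ^ 5 ≤ (10/3:ℝ) ^ 5 := by
        rw [h5, h6]; linarith
      exact le_of_pow_le_pow_left₀ (by norm_num) (by norm_num) h9
    linarith
  have key : (3*(n:ℝ)/10) ^ ((n:ℝ)) ≤ ((n:ℝ) * t) ^ ((n:ℝ) * t) := by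
    rw [Real.rpow_def_of_pos (by positivity : (0:ℝ) < 3*(n:ℝ)/10),
        Real.rpow_def_of_pos hmpos]
    apply Real.exp_le_exp.mpr
    have hlog3n : Real.log (3*(n:ℝ)/10) = L + Real.log (3/10) := by
      rw [show (3*(n:ℝ)/10) = (n:ℝ) * (3/10) by ring,
          Real.log_mul (ne_of_gt hnpos) (by norm_num)]
    have hlog310 : Real.log (3/10 : ℝ) = - Real.log (10/3) := by
      rw [show (3/10:ℝ) = (10/3)⁻¹ by norm_num, Real.log_inv]
    rw [hlog3n, hlogm, hlog310]
    have hcore : L + -Real.log (10/3) ≤ t * (L + Real.log t) := by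
      have h1 : t * (1 - 1/t) ≤ t * Real.log t :=
        mul_le_mul_of_nonneg_left hlogt tpos.le
      have h2 : t * (1 - 1/t) = t - 1 := by field_simp
      have h3 : t * L = L - 1 := by
        rw [htdef]; field_simp
      have h4 : t * (L + Real.log t) = t * L + t * Real.log t := by ring
      rw [htdef] at *
      linarith
    calc (L + -Real.log (10/3)) * (n:ℝ)
        ≤ (t * (L + Real.log t)) * (n:ℝ) :=
          mul_le_mul_of_nonneg_right hcore hnpos.le
      _ = (L + Real.log t) * ((n:ℝ) * t) := by ring
  have hsplit : 3*(n:ℝ)^2/(10*L) = ((n:ℝ)/L) * (3*(n:ℝ)/10) := by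
    field_simp
  rw [ge_iff_le, hsplit, Real.mul_rpow (by positivity) (by positivity), hm]
  exact mul_le_mul_of_nonneg_left key (by positivity)
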